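/- Let n ≥ 2 and let K, L ∈ 𝒦₀(ℝⁿ). Then ∫_{S^{n−1}} (ln ρ_K(u) + ln ρ_L(u) − 2·ln ρ_{K∩L}(u)) dσ(u) = ∫_{S^{n−1}} |ln(ρ_K(u)/ρ_L(u))| dσ(u) = (1/(n·|Dₙ|)) · ∫_{K△L} ‖x‖^{−n} dx. -/

import Mathlib

open MeasureTheory

/-- The uniform (rotation invariant) probability measure `σ` on the unit sphere
`S^{n-1} ⊆ ℝⁿ`. -/
noncomputable def sphereProb (n : ℕ) :
    Measure (Metric.sphere (0 : EuclideanSpace ℝ (Fin n)) 1) :=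
  ((volume : Measure (EuclideanSpace ℝ (Fin n))).toSphere Set.univ)⁻¹ •
    (volume : Measure (EuclideanSpace ℝ (Fin n))).toSphere

/-- The radial function `ρ_K(u) = max {r : r • u ∈ K}` of a set `K ⊆ ℝⁿ`. -/
noncomputable def radialFn {n : ℕ} (K : Set (EuclideanSpace ℝ (Fin n)))
    (u : EuclideanSpace ℝ (Fin n)) : ℝ :=
  sSup {r : ℝ | r • u ∈ K}

/-- The Lebesgue volume `|Dₙ|` of the closed Euclidean unit ball in `ℝⁿ`. -/
noncomputable def unitBallVolume (n : ℕ) : ℝ :=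
  (volume (Metric.closedBall (0 : EuclideanSpace ℝ (Fin n)) 1)).toReal

/-! Along the ray through a unit vector `u`, a convex body containing the origin is the segment
`[0, ρ_K u] • u`, so the ray meets `K △ L` in the radii
`(min (ρ_K u) (ρ_L u), max (ρ_K u) (ρ_L u)]`, and `ρ_{K ∩ L} = min ρ_K ρ_L`. In polar coordinates
`dx = r^{n-1} dr dν(u)`, where the cone measure `ν` has total mass `n |Dₙ|`, the weight
`‖x‖^{-n} = r^{-n}` turns the radial integral over that interval into
`∫ dr / r = |ln (ρ_K u / ρ_L u)|`. -/

open Set Metric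
open scoped ENNReal

section polar
variable {E : Type*} [NormedAddCommGroup E] [NormedSpace ℝ E] [FiniteDimensional ℝ E]
  [MeasurableSpace E] [BorelSpace E] [Nontrivial E] (μ : Measure E) [μ.IsAddHaarMeasure]

theorem lintegral_eq_lintegral_toSphere_lintegral_Ioi {f : E → ℝ≥0∞} (hf : Measurable f) :
    ∫⁻ x, f x ∂μ = ∫⁻ u, (∫⁻ r in Ioi (0 : ℝ),
      ENNReal.ofReal (r ^ (Module.finrank ℝ E - 1)) * f (r • (u : E))) ∂μ.toSphere := by
  have hF : Measurable fun p : sphere (0 : E) 1 × Ioi (0 : ℝ) => f ((p.2 : ℝ) • (p.1 : E)) :=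
    hf.comp (by fun_prop)
  calc ∫⁻ x, f x ∂μ = ∫⁻ x : ({0}ᶜ : Set E), f x ∂μ.comap (↑) := by
        rw [lintegral_subtype_comap (measurableSet_singleton _).compl, restrict_compl_singleton]
    _ = ∫⁻ p, f ((p.2 : ℝ) • (p.1 : E))
          ∂μ.toSphere.prod (Measure.volumeIoiPow (Module.finrank ℝ E - 1)) := by
        rw [← μ.measurePreserving_homeomorphUnitSphereProd.lintegral_comp hF]
        refine lintegral_congr fun x => ?_
        simp [smul_inv_smul₀ (norm_ne_zero_iff.2 x.2)]
    _ = _ := by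
        rw [lintegral_prod _ hF.aemeasurable]
        refine lintegral_congr fun u => ?_
        rw [Measure.volumeIoiPow, lintegral_withDensity_eq_lintegral_mul _ (by fun_prop)
          (show Measurable fun r : Ioi (0 : ℝ) => f (r.1 • (u : E)) by fun_prop),
          ← lintegral_subtype_comap measurableSet_Ioi]
        rfl

end polar

theorem volume_toSphere_real_univ {n : ℕ} (hn : 0 < n) :
    (volume : Measure (EuclideanSpace ℝ (Fin n))).toSphere.real univ
      = n * unitBallVolume n := by
  have : Nonempty (Fin n) := ⟨⟨0, hn⟩⟩
  rw [measureReal_def, Measure.toSphere_apply_univ, ENNReal.toReal_mul, ENNReal.toReal_natCast,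
    finrank_euclideanSpace_fin, unitBallVolume, Measure.addHaar_closedBall_eq_addHaar_ball]

theorem lintegral_Ioc_inv {a b : ℝ} (ha : 0 < a) (hab : a ≤ b) :
    ∫⁻ r in Ioc a b, ENNReal.ofReal r⁻¹ = ENNReal.ofReal (Real.log b - Real.log a) := by
  have hinv : IntegrableOn (fun r : ℝ => r⁻¹) (Ioc a b) :=
    ((continuousOn_inv₀.mono fun r hr => (ha.trans_le hr.1).ne').integrableOn_Icc).mono_set
      Ioc_subset_Icc_self
  rw [← ofReal_integral_eq_lintegral_ofReal hinv
      ((ae_restrict_mem measurableSet_Ioc).mono fun r hr => inv_nonneg.2 (ha.trans hr.1).le),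
    ← intervalIntegral.integral_of_le hab, integral_inv_of_pos ha (ha.trans_le hab),
    Real.log_div (ha.trans_le hab).ne' ha.ne']

theorem abs_log_div_eq_log_max_sub_log_min {a b : ℝ} (ha : 0 < a) (hb : 0 < b) :
    |Real.log (a / b)| = Real.log (max a b) - Real.log (min a b) := by
  rw [Real.log_div ha.ne' hb.ne']
  rcases le_total a b with h | h
  · rw [max_eq_right h, min_eq_left h, abs_of_nonpos (by linarith [Real.log_le_log ha h])]; ring
  · rw [max_eq_left h, min_eq_right h, abs_of_nonneg (by linarith [Real.log_le_log hb h])]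

theorem log_add_log_sub_two_mul_log_min {a b : ℝ} (ha : 0 < a) (hb : 0 < b) :
    Real.log a + Real.log b - 2 * Real.log (min a b) = |Real.log (a / b)| := by
  rw [abs_log_div_eq_log_max_sub_log_min ha hb]
  rcases le_total a b with h | h
  · rw [max_eq_right h, min_eq_left h]; ring
  · rw [max_eq_left h, min_eq_right h]; ring

section radial
variable {n : ℕ} {K L : Set (EuclideanSpace ℝ (Fin n))} {u : EuclideanSpace ℝ (Fin n)}

theorem smul_mem_iff_le_radialFn (hK : IsCompact K) (hKcv : Convex ℝ K) (h0 : 0 ∈ K)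
    (hu : u ≠ 0) {r : ℝ} (hr : 0 ≤ r) : r • u ∈ K ↔ r ≤ radialFn K u := by
  have hS : IsCompact {r : ℝ | r • u ∈ K} :=
    (isClosedEmbedding_smul_left hu).isCompact_preimage hK
  have h0S : (0 : ℝ) ∈ {r : ℝ | r • u ∈ K} := by simpa using h0
  refine ⟨fun h => le_csSup hS.bddAbove h, fun h => ?_⟩
  exact (hKcv.linear_preimage (LinearMap.toSpanSingleton ℝ _ u)).ordConnected.out h0S
    (hS.sSup_mem ⟨0, h0S⟩) ⟨hr, h⟩

theorem radialFn_nonneg (hK : IsCompact K) (h0 : 0 ∈ K) (hu : u ≠ 0) : 0 ≤ radialFn K u :=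
  le_csSup ((isClosedEmbedding_smul_left hu).isCompact_preimage hK).bddAbove (by simpa using h0)

theorem radialFn_pos (hK : IsCompact K) (h0 : 0 ∈ interior K) (hu : u ≠ 0) :
    0 < radialFn K u := by
  have hsmul : ∀ᶠ r : ℝ in nhds 0, r • u ∈ K :=
    (Continuous.tendsto' (by fun_prop) 0 0 (zero_smul ℝ u)).eventually
      (mem_interior_iff_mem_nhds.1 h0)
  obtain ⟨r, hrK, hr⟩ := ((hsmul.filter_mono nhdsWithin_le_nhds).and
    (self_mem_nhdsWithin (s := Ioi 0))).exists
  exact hr.trans_le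
    (le_csSup ((isClosedEmbedding_smul_left hu).isCompact_preimage hK).bddAbove hrK)

theorem radialFn_inter (hK : IsCompact K) (hKcv : Convex ℝ K) (h0K : 0 ∈ K)
    (hL : IsCompact L) (hLcv : Convex ℝ L) (h0L : 0 ∈ L) (hu : u ≠ 0) :
    radialFn (K ∩ L) u = min (radialFn K u) (radialFn L u) := by
  have hle : ∀ r, 0 ≤ r →
      (r ≤ radialFn (K ∩ L) u ↔ r ≤ min (radialFn K u) (radialFn L u)) := fun r hr => by
    rw [le_min_iff,
      ← smul_mem_iff_le_radialFn (hK.inter hL) (hKcv.inter hLcv) ⟨h0K, h0L⟩ hu hr,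
      ← smul_mem_iff_le_radialFn hK hKcv h0K hu hr,
      ← smul_mem_iff_le_radialFn hL hLcv h0L hu hr]
    rfl
  exact le_antisymm ((hle _ (radialFn_nonneg (hK.inter hL) ⟨h0K, h0L⟩ hu)).1 le_rfl)
    ((hle _ (le_min (radialFn_nonneg hK h0K hu) (radialFn_nonneg hL h0L hu))).2 le_rfl)

theorem smul_mem_symmDiff_iff (hK : IsCompact K) (hKcv : Convex ℝ K) (h0K : 0 ∈ K)
    (hL : IsCompact L) (hLcv : Convex ℝ L) (h0L : 0 ∈ L) (hu : u ≠ 0) {r : ℝ} (hr : 0 ≤ r) :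
    r • u ∈ symmDiff K L ↔
      r ∈ Ioc (min (radialFn K u) (radialFn L u)) (max (radialFn K u) (radialFn L u)) := by
  rw [mem_symmDiff, smul_mem_iff_le_radialFn hK hKcv h0K hu hr,
    smul_mem_iff_le_radialFn hL hLcv h0L hu hr, mem_Ioc, min_lt_iff, le_max_iff]
  grind

theorem lintegral_Ioi_indicator_symmDiff_smul (hn : 0 < n)
    (hK : IsCompact K) (hKcv : Convex ℝ K) (h0K : 0 ∈ interior K)
    (hL : IsCompact L) (hLcv : Convex ℝ L) (h0L : 0 ∈ interior L) (hu : ‖u‖ = 1) :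
    ∫⁻ r in Ioi (0 : ℝ), ENNReal.ofReal (r ^ (n - 1)) *
        (symmDiff K L).indicator (fun x => ENNReal.ofReal (‖x‖ ^ (-(n : ℝ)))) (r • u)
      = ENNReal.ofReal |Real.log (radialFn K u / radialFn L u)| := by
  have hu0 : u ≠ 0 := norm_ne_zero_iff.1 (by simp [hu])
  have hKpos := radialFn_pos hK h0K hu0
  have hLpos := radialFn_pos hL h0L hu0
  set m := min (radialFn K u) (radialFn L u)
  set M := max (radialFn K u) (radialFn L u)
  have hm : 0 < m := lt_min hKpos hLpos
  have hintegrand : ∀ r ∈ Ioi (0 : ℝ), ENNReal.ofReal (r ^ (n - 1)) *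
      (symmDiff K L).indicator (fun x => ENNReal.ofReal (‖x‖ ^ (-(n : ℝ)))) (r • u)
        = (Ioc m M).indicator (fun r => ENNReal.ofReal r⁻¹) r := by
    intro r (hr : 0 < r)
    have hnorm : ‖r • u‖ = r := by rw [norm_smul, hu, mul_one, Real.norm_of_nonneg hr.le]
    have hmem := smul_mem_symmDiff_iff hK hKcv (interior_subset h0K)
      hL hLcv (interior_subset h0L) hu0 hr.le
    by_cases hrm : r ∈ Ioc m M
    · rw [indicator_of_mem hrm, indicator_of_mem (hmem.2 hrm), hnorm,
        ← ENNReal.ofReal_mul (by positivity), Real.rpow_neg hr.le, Real.rpow_natCast,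
        ← pow_sub_one_mul hn.ne']
      field_simp
    · rw [indicator_of_notMem hrm, indicator_of_notMem (mt hmem.1 hrm), mul_zero]
  rw [setLIntegral_congr_fun measurableSet_Ioi hintegrand,
    lintegral_indicator measurableSet_Ioc, Measure.restrict_restrict measurableSet_Ioc,
    inter_eq_left.2 (Ioc_subset_Ioi_self.trans (Ioi_subset_Ioi hm.le)),
    lintegral_Ioc_inv hm min_le_max,
    abs_log_div_eq_log_max_sub_log_min hKpos hLpos]

theorem integral_abs_log_div_radialFn (hn : 0 < n)
    (hK : IsCompact K) (hKcv : Convex ℝ K) (h0K : 0 ∈ interior K)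
    (hL : IsCompact L) (hLcv : Convex ℝ L) (h0L : 0 ∈ interior L) :
    ∫ u : sphere (0 : EuclideanSpace ℝ (Fin n)) 1,
        |Real.log (radialFn K ↑u / radialFn L ↑u)| ∂(sphereProb n)
      = (1 / ((n : ℝ) * unitBallVolume n)) * ∫ x in symmDiff K L, ‖x‖ ^ (-(n : ℝ)) := by
  have : Nonempty (Fin n) := ⟨⟨0, hn⟩⟩
  have hKL : MeasurableSet (symmDiff K L) :=
    hK.isClosed.measurableSet.symmDiff hL.isClosed.measurableSet
  set f := (symmDiff K L).indicator fun x : EuclideanSpace ℝ (Fin n) =>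
    ENNReal.ofReal (‖x‖ ^ (-(n : ℝ)))
  have hf : Measurable f := Measurable.indicator (by fun_prop) hKL
  have hprofile (u : sphere (0 : EuclideanSpace ℝ (Fin n)) 1) :=
    lintegral_Ioi_indicator_symmDiff_smul hn hK hKcv h0K hL hLcv h0L (norm_eq_of_mem_sphere u)
  have hpolar : ∫⁻ x in symmDiff K L, ENNReal.ofReal (‖x‖ ^ (-(n : ℝ)))
      = ∫⁻ u : sphere (0 : EuclideanSpace ℝ (Fin n)) 1,
          ENNReal.ofReal |Real.log (radialFn K ↑u / radialFn L ↑u)| ∂volume.toSphere := by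
    rw [← lintegral_indicator hKL, lintegral_eq_lintegral_toSphere_lintegral_Ioi volume hf,
      finrank_euclideanSpace_fin]
    exact lintegral_congr hprofile
  have hmeas : Measurable fun u : sphere (0 : EuclideanSpace ℝ (Fin n)) 1 =>
      |Real.log (radialFn K ↑u / radialFn L ↑u)| := by
    -- the integrand is a fibre integral of a measurable function on `sphere × ℝ`
    have hlint := Measurable.lintegral_prod_right' (ν := volume.restrict (Ioi (0 : ℝ)))
      (show Measurable fun p : sphere (0 : EuclideanSpace ℝ (Fin n)) 1 × ℝ =>
        ENNReal.ofReal (p.2 ^ (n - 1)) * f (p.2 • (p.1 : EuclideanSpace ℝ (Fin n))) by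
          fun_prop)
    convert hlint.ennreal_toReal using 1
    funext u
    rw [hprofile u, ENNReal.toReal_ofReal (abs_nonneg _)]
  -- no integrability is needed: both sides are `toReal`s of lintegrals
  rw [integral_eq_lintegral_of_nonneg_ae (.of_forall fun u => abs_nonneg _)
      hmeas.aestronglyMeasurable, sphereProb, lintegral_smul_measure, ← hpolar,
    integral_eq_lintegral_of_nonneg_ae (.of_forall fun x => by positivity)
      (measurable_norm.pow_const _).aestronglyMeasurable,
    smul_eq_mul, ENNReal.toReal_mul, ENNReal.toReal_inv, ← measureReal_def,
    volume_toSphere_real_univ hn, one_div]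

end radial

/-- For convex bodies `K, L ⊆ ℝⁿ` (`n ≥ 2`) containing the origin in their interiors:
`∫_{S^{n-1}} (ln ρ_K + ln ρ_L - 2 ln ρ_{K∩L}) dσ = ∫_{S^{n-1}} |ln (ρ_K/ρ_L)| dσ`
`= (1/(n |Dₙ|)) ∫_{K △ L} ‖x‖^{-n} dx`. -/
theorem stmt6 {n : ℕ} (hn : 2 ≤ n)
    (K L : Set (EuclideanSpace ℝ (Fin n)))
    (hKcp : IsCompact K) (hKcv : Convex ℝ K) (hKint : 0 ∈ interior K)
    (hLcp : IsCompact L) (hLcv : Convex ℝ L) (hLint : 0 ∈ interior L) :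
    (∫ u : Metric.sphere (0 : EuclideanSpace ℝ (Fin n)) 1,
        (Real.log (radialFn K ↑u) + Real.log (radialFn L ↑u)
          - 2 * Real.log (radialFn (K ∩ L) ↑u)) ∂(sphereProb n))
      = ∫ u : Metric.sphere (0 : EuclideanSpace ℝ (Fin n)) 1,
          |Real.log (radialFn K ↑u / radialFn L ↑u)| ∂(sphereProb n)
    ∧ (∫ u : Metric.sphere (0 : EuclideanSpace ℝ (Fin n)) 1,
          |Real.log (radialFn K ↑u / radialFn L ↑u)| ∂(sphereProb n))
      = (1 / ((n : ℝ) * unitBallVolume n)) *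
          ∫ x in symmDiff K L, ‖x‖ ^ (-(n : ℝ)) := by
  refine ⟨integral_congr_ae (.of_forall fun u => ?_),
    integral_abs_log_div_radialFn (by omega) hKcp hKcv hKint hLcp hLcv hLint⟩
  have hu := ne_zero_of_mem_unit_sphere u
  dsimp only
  rw [radialFn_inter hKcp hKcv (interior_subset hKint) hLcp hLcv (interior_subset hLint) hu]
  exact log_add_log_sub_two_mul_log_min (radialFn_pos hKcp hKint hu) (radialFn_pos hLcp hLint hu)
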